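/- arXiv:1710.00466 — 7 statements merged into one kernel-verified Lean document; each statement's English description precedes it below -/
import Mathlib

section
/- For every real number α > 0, min{1 + 2α, (2 + α)/(1 + α)} ≤ √3, with equality if and only if α = (√3 − 1)/2. -/
theorem stmt0 (α : ℝ) (hα : 0 < α) :
    min (1 + 2 * α) ((2 + α) / (1 + α)) ≤ Real.sqrt 3 ∧
    (min (1 + 2 * α) ((2 + α) / (1 + α)) = Real.sqrt 3 ↔ α = (Real.sqrt 3 - 1) / 2) := by
  set s := Real.sqrt 3 with hsdef
  have hs2 : s ^ 2 = 3 := Real.sq_sqrt (by norm_num)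
  have hs1 : 1 < s := by nlinarith [Real.sqrt_nonneg 3]
  have hslt2 : s < 2 := by nlinarith [Real.sqrt_nonneg 3]
  have hpos : 0 < 1 + α := by linarith
  rcases le_total α ((s - 1) / 2) with h | h
  · -- 1 + 2α ≤ s, min = 1 + 2α
    have h1 : 1 + 2 * α ≤ s := by linarith
    have h2 : s ≤ (2 + α) / (1 + α) := by
      rw [le_div_iff₀ hpos]; nlinarith
    have hmin : min (1 + 2 * α) ((2 + α) / (1 + α)) = 1 + 2 * α :=
      min_eq_left (by linarith)
    rw [hmin]
    constructor
    · exact h1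
    · constructor
      · intro he; linarith
      · intro he; rw [he]; ring
  · -- (2+α)/(1+α) ≤ s
    have h2 : (2 + α) / (1 + α) ≤ s := by
      rw [div_le_iff₀ hpos]; nlinarith
    have h1 : s ≤ 1 + 2 * α := by linarith
    have hmin : min (1 + 2 * α) ((2 + α) / (1 + α)) = (2 + α) / (1 + α) :=
      min_eq_right (by linarith)
    rw [hmin]
    refine ⟨h2, ?_, ?_⟩
    · intro he
      have : 2 + α = s * (1 + α) := by
        field_simp at he; linarith
      nlinarith
    · intro he
      rw [he]
      have hne : (1 : ℝ) + (s - 1) / 2 ≠ 0 := by nlinarith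
      have hnum : (2 + (s - 1) / 2) = s * (1 + (s - 1) / 2) := by nlinarith
      rw [hnum, mul_div_assoc, div_self hne, mul_one]
end

section
/- Let α ≥ 1, let x₁ satisfy 0 < x₁ and x₁(2 + 1/α) ≤ 1, and let d = x₁/(α(1+α)). Then for all x with 0 ≤ x ≤ x₁ and x ≤ (1 − d)/2, we have (1 − x − d) / max{x, 1 − x − x₁/α} ≤ (2 + α)/(1 + α), provided max{x, 1 − x − x₁/α} > 0. -/
theorem stmt4 (α x₁ d : ℝ) (hα : 1 ≤ α) (h1 : 0 < x₁) (hx1 : x₁ * (2 + 1 / α) ≤ 1)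
    (hd : d = x₁ / (α * (1 + α))) :
    ∀ x : ℝ, 0 ≤ x → x ≤ x₁ → x ≤ (1 - d) / 2 → 0 < max x (1 - x - x₁ / α) →
      (1 - x - d) / max x (1 - x - x₁ / α) ≤ (2 + α) / (1 + α) := by
  intro x hx0 hxx1 hxd hmax
  have hα0 : (0:ℝ) < α := lt_of_lt_of_le one_pos hα
  have hα1 : (0:ℝ) < 1 + α := by linarith
  have hdval : d * (α * (1 + α)) = x₁ := by
    rw [hd]; field_simp
  have hx1' : x₁ * (2 * α + 1) ≤ α := by
    have := hx1
    rw [div_eq_mul_inv] at this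
    have h2 : x₁ * (2 + 1 / α) * α ≤ 1 * α := mul_le_mul_of_nonneg_right hx1 hα0.le
    field_simp at h2
    nlinarith [h2]
  rcases le_total x (1 - x - x₁ / α) with h | h
  · rw [max_eq_right h]
    rw [max_eq_right h] at hmax
    rw [div_le_div_iff₀ hmax hα1]
    have hq : x₁ / α * α = x₁ := by field_simp
    nlinarith [hq, hdval, mul_pos hα0 hα1]
  · rw [max_eq_left h]
    rw [max_eq_left h] at hmax
    rw [div_le_div_iff₀ hmax hα1]
    have hq : x₁ / α * α = x₁ := by field_simp
    nlinarith [hq, hdval, mul_pos hα0 hα1]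
end

section
/- Let 0 < α ≤ 1, let x₁ > 0 with 2x₁/α ≤ 1, and let d = x₁/(1+α). Then for all x with 0 ≤ x ≤ (1 − d)/2, (1 − x − d) / max{1 − x − x₁/α, x₁/α} ≤ (2 + α)/(1 + α). -/
theorem stmt5 (α x₁ d : ℝ) (hα0 : 0 < α) (hα1 : α ≤ 1) (h1 : 0 < x₁)
    (hx1 : 2 * x₁ / α ≤ 1) (hd : d = x₁ / (1 + α)) :
    ∀ x : ℝ, 0 ≤ x → x ≤ (1 - d) / 2 →
      (1 - x - d) / max (1 - x - x₁ / α) (x₁ / α) ≤ (2 + α) / (1 + α) := by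
  intro x hx0 hx2
  have h1a : (0:ℝ) < 1 + α := by linarith
  have hxa : 0 < x₁ / α := div_pos h1 hα0
  rcases le_total (x₁ / α) (1 - x - x₁ / α) with h | h
  · rw [max_eq_left h]
    rw [div_le_div_iff₀ (by linarith) h1a]
    have : 2 * (x₁ / α) ≤ 1 - x := by linarith
    have hx1' : x₁ ≤ α * (x₁ / α) := by
      rw [mul_div_cancel₀ _ (ne_of_gt hα0)]
    subst hd
    rw [sub_mul, sub_mul, div_mul_cancel₀ _ (ne_of_gt h1a)]
    have hx1'' : x₁ = α * (x₁ / α) := (mul_div_cancel₀ _ (ne_of_gt hα0)).symm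
    nlinarith [mul_nonneg hα0.le (by linarith : (0:ℝ) ≤ 1 - x - 2 * (x₁/α))]
  · rw [max_eq_right h]
    rw [div_le_div_iff₀ hxa h1a]
    subst hd
    rw [sub_mul, sub_mul, div_mul_cancel₀ _ (ne_of_gt h1a)]
    have hx1'' : x₁ = α * (x₁ / α) := (mul_div_cancel₀ _ (ne_of_gt hα0)).symm
    nlinarith [mul_nonneg h1a.le (by linarith : (0:ℝ) ≤ 2 * (x₁/α) - (1 - x))]
end

section
/- Let 0 < α ≤ 1 and x₁ > 0 with 2x₁/α ≤ 1. Then for all x with 2x₁/α ≤ x ≤ 1, (x − x₁/(1+α)) / max{x − x₁/α, x₁/α} ≤ (2+α)/(1+α). -/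
theorem stmt7 (α x₁ : ℝ) (hα0 : 0 < α) (hα1 : α ≤ 1) (h1 : 0 < x₁)
    (hx1 : 2 * x₁ / α ≤ 1) :
    ∀ x : ℝ, 2 * x₁ / α ≤ x → x ≤ 1 →
      (x - x₁ / (1 + α)) / max (x - x₁ / α) (x₁ / α) ≤ (2 + α) / (1 + α) := by
  intro x hxl hxu
  have hd : (0:ℝ) < x₁ / α := div_pos h1 hα0
  have h2 : 2 * x₁ / α = 2 * (x₁ / α) := by ring
  have hmax : max (x - x₁ / α) (x₁ / α) = x - x₁ / α := by
    apply max_eq_left; linarith [hxl, h2]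
  rw [hmax]
  have hden : 0 < x - x₁ / α := by linarith [hxl, h2]
  rw [div_le_div_iff₀ hden (by linarith : (0:ℝ) < 1 + α)]
  have hx : x₁ / α * α = x₁ := div_mul_cancel₀ _ (ne_of_gt hα0)
  have hx₁ : x₁ / (1 + α) * (1 + α) = x₁ := div_mul_cancel₀ _ (by linarith)
  nlinarith [hxl, h2, hd]
end

section
/- Let α ≥ 1 and let x₁ satisfy 0 < x₁ ≤ α/(2α+1). Set d = x₁/(α(1+α)) and x₄ = (1+α)x₁/α. Then for all x with x₄ ≤ x ≤ 1, (x − d) / max{1 − x, x − x₁/α} ≤ (2+α)/(1+α), provided max{1 − x, x − x₁/α} > 0. -/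
/-! Only the second term of the maximum is needed: writing `y = x₁ / α`, so that `d = y / (1 + α)`
and `x₄ = (1 + α) y`, the bound `x ≥ x₄` gives `(1 + α)(x - d) ≤ (2 + α)(x - y)`. -/

lemma sub_div_div_le_of_mul_le {c y x m : ℝ} (hc : 0 < c) (hx : c * y ≤ x) (hm : 0 < m)
    (hxm : x - y ≤ m) : (x - y / c) / m ≤ (c + 1) / c := by
  rw [div_le_div_iff₀ hm hc]
  calc (x - y / c) * c = c * x - y := by field_simp
    _ ≤ (c + 1) * (x - y) := by linarith
    _ ≤ (c + 1) * m := mul_le_mul_of_nonneg_left hxm (by linarith)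

theorem stmt8_general (α x₁ d x₄ : ℝ) (hα : 1 ≤ α)
    (hd : d = x₁ / (α * (1 + α))) (hx4 : x₄ = (1 + α) * x₁ / α) :
    ∀ x : ℝ, x₄ ≤ x → x ≤ 1 → 0 < max (1 - x) (x - x₁ / α) →
      (x - d) / max (1 - x) (x - x₁ / α) ≤ (2 + α) / (1 + α) := by
  intro x hx₄ _ hm
  rw [hd, ← div_div, show 2 + α = (1 + α) + 1 by ring]
  refine sub_div_div_le_of_mul_le (by linarith) ?_ hm (le_max_right _ _)
  rwa [hx4, mul_div_assoc] at hx₄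

theorem stmt8 (α x₁ d x₄ : ℝ) (hα : 1 ≤ α) (h1 : 0 < x₁) (hx1 : x₁ ≤ α / (2 * α + 1))
    (hd : d = x₁ / (α * (1 + α))) (hx4 : x₄ = (1 + α) * x₁ / α) :
    ∀ x : ℝ, x₄ ≤ x → x ≤ 1 → 0 < max (1 - x) (x - x₁ / α) →
      (x - d) / max (1 - x) (x - x₁ / α) ≤ (2 + α) / (1 + α) :=
  stmt8_general α x₁ d x₄ hα hd hx4
end

section
/- Let x₁ < x₄ be real numbers and suppose S₀₀ is a finite nonempty set of points x ∈ (x₁, x₄] together with positive idle times I(x), such that [x₁, x₄] = ⋂_{x ∈ S₀₀} [x − I(x)/2, x + I(x)/2]. If x₃ denotes the maximum of S₀₀, then x₄ − x₃ ≤ x₃ − x₁. -/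
theorem Finset.biInter_Icc {ι α : Type*} [Lattice α] (s : Finset ι) (hs : s.Nonempty)
    (a b : ι → α) :
    ⋂ i ∈ s, Set.Icc (a i) (b i) = Set.Icc (s.sup' hs a) (s.inf' hs b) := by
  ext x
  simp [Finset.sup'_le_iff, Finset.le_inf'_iff, forall_and]

/- The left endpoint of the intersection is the largest left endpoint `x₀ - I x₀ / 2 = x₁`,
so `I x₀ / 2 = x₀ - x₁`, while `x₄ ≤ x₀ + I x₀ / 2` because `x₄` lies in the range of `x₀`. -/
theorem stmt10_general (x₁ x₄ : ℝ) (h14 : x₁ < x₄) (S : Finset ℝ) (hS : S.Nonempty)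
    (I : ℝ → ℝ)
    (hinter : Set.Icc x₁ x₄ = ⋂ x ∈ S, Set.Icc (x - I x / 2) (x + I x / 2)) :
    x₄ - S.max' hS ≤ S.max' hS - x₁ := by
  rw [Finset.biInter_Icc S hS, Set.Icc_eq_Icc_iff h14.le] at hinter
  obtain ⟨hleft, hright⟩ := hinter
  obtain ⟨x₀, hx₀, hsup⟩ := S.exists_mem_eq_sup' hS (fun x => x - I x / 2)
  have hx₄ : x₄ ≤ x₀ + I x₀ / 2 := hright ▸ S.inf'_le (fun x => x + I x / 2) hx₀
  have hx₀max : x₀ ≤ S.max' hS := S.le_max' x₀ hx₀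
  linarith

theorem stmt10 (x₁ x₄ : ℝ) (h14 : x₁ < x₄) (S : Finset ℝ) (hS : S.Nonempty)
    (I : ℝ → ℝ) (hIpos : ∀ x ∈ S, 0 < I x)
    (hSsub : ∀ x ∈ S, x ∈ Set.Ioc x₁ x₄)
    (hinter : Set.Icc x₁ x₄ = ⋂ x ∈ S, Set.Icc (x - I x / 2) (x + I x / 2)) :
    x₄ - S.max' hS ≤ S.max' hS - x₁ :=
  stmt10_general x₁ x₄ h14 S hS I hinter
end

section
/- Let x₁ < x₄ be real numbers and S₀₀ a finite nonempty set of points x ∈ [x₁, x₄) with positive idle times I(x) such that [x₁, x₄] = ⋂_{x ∈ S₀₀} [x − I(x)/2, x + I(x)/2]. If x₂ = min S₀₀, then x₂ − x₁ ≤ x₄ − x₂, i.e., x₂ ≤ (x₁ + x₄)/2. -/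
/-! The interval whose right endpoint `x + I x / 2` is smallest ends exactly at `x₄`, and like every
interval of the family it starts at or before `x₁`; so its centre `y` satisfies
`y - x₁ ≤ I y / 2 ≤ x₄ - y`, and `min S ≤ y`. -/

open Set

theorem exists_left_le_right_le_of_Icc_eq_biInter {ι α : Type*} [LinearOrder α]
    {s : Finset ι} (hs : s.Nonempty) {a b : ι → α} {l r : α} (hlr : l ≤ r)
    (h : Icc l r = ⋂ i ∈ s, Icc (a i) (b i)) : ∃ i ∈ s, a i ≤ l ∧ b i ≤ r := by
  obtain ⟨i, hi, hmin⟩ := s.exists_min_image b hs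
  have hleft : ∀ j ∈ s, a j ≤ l := fun j hj =>
    ((h ▸ biInter_subset_of_mem (t := fun j => Icc (a j) (b j)) hj) (left_mem_Icc.2 hlr)).1
  refine ⟨i, hi, hleft i hi, ?_⟩
  -- otherwise the smallest right endpoint `b i` lies in every interval but not in `[l, r]`
  by_contra! hr
  have hbi : b i ∈ ⋂ j ∈ s, Icc (a j) (b j) :=
    mem_iInter₂.2 fun j hj => ⟨(hleft j hj).trans (hlr.trans hr.le), hmin j hj⟩
  rw [← h] at hbi
  exact hr.not_ge hbi.2

theorem stmt11_general (x₁ x₄ : ℝ) (h14 : x₁ < x₄) (S : Finset ℝ) (hS : S.Nonempty)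
    (I : ℝ → ℝ)
    (hinter : Set.Icc x₁ x₄ = ⋂ x ∈ S, Set.Icc (x - I x / 2) (x + I x / 2)) :
    S.min' hS - x₁ ≤ x₄ - S.min' hS := by
  obtain ⟨y, hy, hleft, hright⟩ :=
    exists_left_le_right_le_of_Icc_eq_biInter hS h14.le hinter
  have hmin : S.min' hS ≤ y := S.min'_le y hy
  linarith

theorem stmt11 (x₁ x₄ : ℝ) (h14 : x₁ < x₄) (S : Finset ℝ) (hS : S.Nonempty)
    (I : ℝ → ℝ) (hIpos : ∀ x ∈ S, 0 < I x)
    (hSsub : ∀ x ∈ S, x ∈ Set.Ico x₁ x₄)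
    (hinter : Set.Icc x₁ x₄ = ⋂ x ∈ S, Set.Icc (x - I x / 2) (x + I x / 2)) :
    S.min' hS - x₁ ≤ x₄ - S.min' hS :=
  stmt11_general x₁ x₄ h14 S hS I hinter
end
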